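/- Every eigenfunction of the discrete Maxwell eigenvalue problem with nonzero eigenvalue is discretely divergence-free: if λ ∈ ℝ with λ ≠ 0 and matrices U ∈ ℝ^{n×(n−1)}, V ∈ ℝ^{(n−1)×n} satisfy U A − Bᵀ V Bᵀ = (h²λ/6) U D and −B U B + A V = (h²λ/6) D V, then B U D + D V Bᵀ = 0. -/
import Mathlib


open Matrix Real

/-- Stiffness matrix `A ∈ ℝ^{(n-1)×(n-1)}`. -/
def Amat (n : ℕ) : Matrix (Fin (n - 1)) (Fin (n - 1)) ℝ :=
  Matrix.of fun k l =>
    if (k : ℕ) = (l : ℕ) then 2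
    else if (k : ℕ) + 1 = (l : ℕ) ∨ (l : ℕ) + 1 = (k : ℕ) then -1 else 0

/-- Mass matrix `D ∈ ℝ^{(n-1)×(n-1)}`. -/
def Dmat (n : ℕ) : Matrix (Fin (n - 1)) (Fin (n - 1)) ℝ :=
  Matrix.of fun k l =>
    if (k : ℕ) = (l : ℕ) then 4
    else if (k : ℕ) + 1 = (l : ℕ) ∨ (l : ℕ) + 1 = (k : ℕ) then 1 else 0

/-- Discrete divergence matrix `B ∈ ℝ^{(n-1)×n}`. -/
def Bmat (n : ℕ) : Matrix (Fin (n - 1)) (Fin n) ℝ :=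
  Matrix.of fun k l =>
    if (l : ℕ) = (k : ℕ) then -1 else if (l : ℕ) = (k : ℕ) + 1 then 1 else 0

lemma BBt (n : ℕ) (hn : 2 ≤ n) : Bmat n * (Bmat n)ᵀ = Amat n := by
  ext k l
  have hk : (k : ℕ) < n - 1 := k.isLt
  have hl : (l : ℕ) < n - 1 := l.isLt
  set ka : Fin n := ⟨k, by omega⟩
  set k1 : Fin n := ⟨(k : ℕ) + 1, by omega⟩
  have hne : ka ≠ k1 := by
    simp [ka, k1, Fin.ext_iff]
  have key : ∀ j : Fin n, Bmat n k j * Bmat n l j =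
      (if j = ka then (-1 : ℝ) else if j = k1 then 1 else 0) * Bmat n l j := by
    intro j
    congr 1
    simp only [Bmat, Matrix.of_apply, Fin.ext_iff, ka, k1]
  rw [Matrix.mul_apply]
  simp only [Matrix.transpose_apply]
  rw [Finset.sum_congr rfl (fun j _ => key j)]
  rw [Fintype.sum_eq_add ka k1 hne (fun c hc => by
    simp [hc.1, hc.2])]
  simp only [if_pos rfl, if_neg hne, if_pos rfl]
  simp only [Bmat, Amat, Matrix.of_apply, ka, k1]
  split_ifs <;> norm_num <;> omega

/-- Every eigenfunction of the discrete Maxwell eigenvalue problem with nonzero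
eigenvalue is discretely divergence-free (with `h = 1/n`). -/
theorem stmt6 (n : ℕ) (hn : 2 ≤ n) (h : ℝ) (hh : h = 1 / n)
    (lam : ℝ) (hlam : lam ≠ 0)
    (U : Matrix (Fin n) (Fin (n - 1)) ℝ) (V : Matrix (Fin (n - 1)) (Fin n) ℝ)
    (h1 : U * Amat n - (Bmat n)ᵀ * V * (Bmat n)ᵀ = (h ^ 2 * lam / 6) • (U * Dmat n))
    (h2 : -(Bmat n * U * Bmat n) + Amat n * V = (h ^ 2 * lam / 6) • (Dmat n * V)) :
    Bmat n * U * Dmat n + Dmat n * V * (Bmat n)ᵀ = 0 := by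
  have hBBt := BBt n hn
  have hc : h ^ 2 * lam / 6 ≠ 0 := by
    have hn0 : (n : ℝ) ≠ 0 := by positivity
    have : h ≠ 0 := by rw [hh]; positivity
    positivity
  set c := h ^ 2 * lam / 6 with hcdef
  set A := Amat n
  set D := Dmat n
  set B := Bmat n
  have e1 := congrArg (fun M => B * M) h1
  have e2 := congrArg (fun M => M * Bᵀ) h2
  simp only [Matrix.mul_sub, Matrix.add_mul, Matrix.neg_mul, Matrix.mul_smul,
    Matrix.smul_mul] at e1 e2
  have key : c • (B * (U * D)) + c • (D * V * Bᵀ) = 0 := by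
    rw [← e1, ← e2]
    have a1 : B * (Bᵀ * V * Bᵀ) = A * V * Bᵀ := by
      rw [← hBBt]; simp [Matrix.mul_assoc]
    have a2 : B * U * B * Bᵀ = B * (U * A) := by
      rw [← hBBt]; simp [Matrix.mul_assoc]
    rw [a1, a2]; abel
  rw [← smul_add] at key
  have := (smul_eq_zero.mp key).resolve_left hc
  rw [← Matrix.mul_assoc] at this
  exact this
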